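/- arXiv:1710.02536 — 3 statements merged into one kernel-verified Lean document; each statement's English description precedes it below -/
import Mathlib

section
/- Let n ≥ 1, let t be a real subspace of the n×n complex matrices all of whose elements ξ are skew-Hermitian (ξ* = −ξ) and trace-free, and set t̃ := ℝ·(i·Id) + t. Let σ be an invertible n×n complex matrix such that the real-linear map X ↦ σ·X·σ* maps t̃ bijectively onto t̃, and let M be a skew-Hermitian n×n complex matrix such that Re(tr(σ·M·σ*·ξ*)) = 0 for every ξ ∈ t. Then there exists a real number c with σ·M·σ* = c·(i·Id) if and only if M ∈ t̃. -/
open Matrix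

lemma trace_mul_conjTranspose_re_eq_zero {n : ℕ} (z : Matrix (Fin n) (Fin n) ℂ)
    (h : ((z * zᴴ).trace).re = 0) : z = 0 := by
  have hexp : ((z * zᴴ).trace).re = ∑ i, ∑ j, Complex.normSq (z i j) := by
    simp only [Matrix.trace, Matrix.diag, Matrix.mul_apply, Matrix.conjTranspose_apply,
      Complex.re_sum]
    refine Finset.sum_congr rfl fun i _ => Finset.sum_congr rfl fun j _ => ?_
    rw [show star (z i j) = starRingEnd ℂ (z i j) from rfl, Complex.mul_conj]
    simp
  rw [hexp] at h
  ext i j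
  have h1 : ∀ i ∈ Finset.univ, (0:ℝ) ≤ ∑ j, Complex.normSq (z i j) :=
    fun i _ => Finset.sum_nonneg fun j _ => Complex.normSq_nonneg _
  have h2 := (Finset.sum_eq_zero_iff_of_nonneg h1).mp h i (Finset.mem_univ i)
  have h3 := (Finset.sum_eq_zero_iff_of_nonneg
    (fun j _ => Complex.normSq_nonneg (z i j))).mp h2 j (Finset.mem_univ j)
  simpa using Complex.normSq_eq_zero.mp h3

/-- linear-algebraic content of Theorem 4.3 of the paper.
Let `t` be a real subspace of the `n × n` complex matrices consisting of skew-Hermitian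
trace-free matrices, and let `t̃ = ℝ·(i·Id) ⊕ t`. If `σ` is invertible, conjugation
`X ↦ σ X σᴴ` maps `t̃` bijectively onto `t̃`, and `M` is skew-Hermitian with
`Re (tr (σ M σᴴ ξᴴ)) = 0` for all `ξ ∈ t`, then `σ M σᴴ = c · (i · Id)` for some real `c`
if and only if `M ∈ t̃`. -/
theorem sigma_balanced_iff_balanced_relative
    (n : ℕ) (hn : 1 ≤ n)
    (t : Submodule ℝ (Matrix (Fin n) (Fin n) ℂ))
    (ht : ∀ ξ ∈ t, ξᴴ = -ξ ∧ ξ.trace = 0)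
    (σ : Matrix (Fin n) (Fin n) ℂ) (hσ : IsUnit σ)
    (hσt : ∀ X : Matrix (Fin n) (Fin n) ℂ,
      X ∈ Submodule.span ℝ {Complex.I • (1 : Matrix (Fin n) (Fin n) ℂ)} ⊔ t ↔
        σ * X * σᴴ ∈ Submodule.span ℝ {Complex.I • (1 : Matrix (Fin n) (Fin n) ℂ)} ⊔ t)
    (M : Matrix (Fin n) (Fin n) ℂ) (hM : Mᴴ = -M)
    (hF : ∀ ξ ∈ t, ((σ * M * σᴴ * ξᴴ).trace).re = 0) :
    (∃ c : ℝ, σ * M * σᴴ = c • Complex.I • (1 : Matrix (Fin n) (Fin n) ℂ)) ↔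
      M ∈ Submodule.span ℝ {Complex.I • (1 : Matrix (Fin n) (Fin n) ℂ)} ⊔ t := by
  constructor
  · rintro ⟨c, hc⟩
    rw [hσt, hc]
    exact Submodule.mem_sup_left
      (Submodule.smul_mem _ c (Submodule.mem_span_singleton_self _))
  · intro hMt
    rw [hσt] at hMt
    obtain ⟨y, hy, z, hz, hyz⟩ := Submodule.mem_sup.mp hMt
    obtain ⟨a, rfl⟩ := Submodule.mem_span_singleton.mp hy
    obtain ⟨hz1, hz2⟩ := ht z hz
    have h0 := hF z hz
    have htrz : (z * zᴴ).trace.re = 0 := by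
      have key : σ * M * σᴴ * zᴴ = a • (Complex.I • zᴴ) + z * zᴴ := by
        rw [← hyz]
        simp [add_mul, Matrix.smul_mul, smul_smul]
      rw [key] at h0
      have htrzH : zᴴ.trace = 0 := by
        rw [hz1, Matrix.trace_neg, hz2, neg_zero]
      simpa [Matrix.trace_add, Matrix.trace_smul, htrzH] using h0
    have hz0 := trace_mul_conjTranspose_re_eq_zero z htrz
    exact ⟨a, by rw [← hyz, hz0, add_zero]⟩
end

section
/- Let B be a Hermitian n×n complex matrix and let μ be a finite Borel measure on ℂⁿ with μ({0}) = 0. Then the function ℝ → ℝ given by t ↦ ∫ (‖exp(t·B)·z‖²/‖z‖²) dμ(z) is well-defined and convex on ℝ. -/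
/-!
Diagonalise `B = U D U*` with `U` unitary and `D = diag(λᵢ)` real. Then
`‖exp(tB) z‖² = ∑ᵢ |(U* z)ᵢ|² e^{2λᵢ t}`, a nonnegative combination of exponentials, so the
integrand is convex in `t` for each `z`; it is bounded by `‖exp(tB)‖²`, hence integrable for the
finite measure `μ`, and integrating a pointwise convex family preserves convexity.
-/

open Matrix MeasureTheory

theorem convexOn_integral {α E : Type*} [MeasurableSpace α] {μ : Measure α}
    [AddCommGroup E] [Module ℝ E] {s : Set E} (hs : Convex ℝ s) {f : E → α → ℝ}
    (hf_int : ∀ x ∈ s, Integrable (f x) μ) (hf : ∀ᵐ a ∂μ, ConvexOn ℝ s fun x => f x a) :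
    ConvexOn ℝ s fun x => ∫ a, f x a ∂μ := by
  refine ⟨hs, fun x hx y hy p q hp hq hpq => ?_⟩
  have hpx := (hf_int x hx).const_mul p
  have hqy := (hf_int y hy).const_mul q
  calc ∫ a, f (p • x + q • y) a ∂μ
      ≤ ∫ a, (p * f x a + q * f y a) ∂μ :=
        integral_mono_ae (hf_int _ (hs hx hy hp hq hpq)) (hpx.add hqy)
          (hf.mono fun a ha => ha.2 hx hy hp hq hpq)
    _ = p • ∫ a, f x a ∂μ + q • ∫ a, f y a ∂μ := by
        rw [integral_add hpx hqy, integral_const_mul, integral_const_mul, smul_eq_mul, smul_eq_mul]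

theorem integrable_sq_norm_div_sq_norm {𝕜 E F : Type*} [NontriviallyNormedField 𝕜]
    [NormedAddCommGroup E] [NormedSpace 𝕜 E] [MeasurableSpace E] [OpensMeasurableSpace E]
    [NormedAddCommGroup F] [NormedSpace 𝕜 F] (L : E →L[𝕜] F) (μ : Measure E)
    [IsFiniteMeasure μ] :
    Integrable (fun z => ‖L z‖ ^ 2 / ‖z‖ ^ 2) μ := by
  have hmeas : Measurable fun z => ‖L z‖ ^ 2 / ‖z‖ ^ 2 :=
    (L.continuous.norm.pow 2).measurable.div (continuous_norm.pow 2).measurable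
  refine (integrable_const (‖L‖ ^ 2)).mono' hmeas.aestronglyMeasurable (ae_of_all _ fun z => ?_)
  rw [Real.norm_of_nonneg (by positivity)]
  refine div_le_of_le_mul₀ (by positivity) (by positivity) ?_
  rw [← mul_pow]
  exact pow_le_pow_left₀ (norm_nonneg _) (L.le_opNorm z) 2

theorem convexOn_sum_mul_exp_mul {ι : Type*} (s : Finset ι) {c : ι → ℝ}
    (hc : ∀ i ∈ s, 0 ≤ c i) (a : ι → ℝ) :
    ConvexOn ℝ Set.univ fun t => ∑ i ∈ s, c i * Real.exp (a i * t) := by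
  have := Finset.sum_induction (s := s) (fun i t => c i * Real.exp (a i * t))
    (ConvexOn ℝ Set.univ) (fun _ _ => ConvexOn.add) (convexOn_const 0 convex_univ) fun i hi =>
      (convexOn_exp.comp_linearMap (LinearMap.lsmul ℝ ℝ (a i))).smul (hc i hi)
  simpa only [Finset.sum_fn] using this

namespace Matrix

variable {𝕜 n : Type*} [RCLike 𝕜] [Fintype n] [DecidableEq n]

theorem norm_toEuclideanLin_unitary_conj {U : Matrix n n 𝕜} (hU : U ∈ unitaryGroup n 𝕜)
    (M : Matrix n n 𝕜) (x : EuclideanSpace 𝕜 n) :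
    ‖toEuclideanLin (U * M * star U) x‖ = ‖toEuclideanLin M (toEuclideanLin (star U) x)‖ := by
  change ‖toEuclideanCLM (n := n) (𝕜 := 𝕜) (U * M * star U) x‖ = _
  rw [map_mul, map_mul]
  exact ContinuousLinearMap.norm_map_of_mem_unitary (Unitary.map_mem (toEuclideanCLM (n := n) (𝕜 := 𝕜)) hU) _

theorem norm_sq_toEuclideanLin_diagonal (d : n → 𝕜) (x : EuclideanSpace 𝕜 n) :
    ‖toEuclideanLin (diagonal d) x‖ ^ 2 = ∑ i, ‖d i‖ ^ 2 * ‖x i‖ ^ 2 := by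
  simp [EuclideanSpace.norm_sq_eq, mulVec_diagonal, mul_pow]

namespace IsHermitian

variable {B : Matrix n n ℂ} (hB : B.IsHermitian)

theorem exp_real_smul (t : ℝ) :
    NormedSpace.exp (t • B) = (hB.eigenvectorUnitary : Matrix n n ℂ)
      * diagonal (fun i => (Real.exp (t * hB.eigenvalues i) : ℂ))
      * star (hB.eigenvectorUnitary : Matrix n n ℂ) := by
  set U : Matrix n n ℂ := ↑hB.eigenvectorUnitary
  have hU : U⁻¹ = star U := inv_eq_left_inv (UnitaryGroup.star_mul_self _)
  have hdiag : t • diagonal (RCLike.ofReal ∘ hB.eigenvalues)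
      = diagonal fun i => ((t * hB.eigenvalues i : ℝ) : ℂ) := by
    rw [← diagonal_smul]
    congr 1
    ext i
    simp [Complex.real_smul]
  conv_lhs => rw [hB.spectral_theorem, Unitary.conjStarAlgAut_apply, ← smul_mul,
    ← Matrix.mul_smul, ← hU, hdiag, exp_conj _ _ Unitary.isUnit_coe, exp_diagonal, hU]
  congr 3
  ext i
  simp [← Complex.exp_eq_exp_ℂ, Complex.ofReal_exp]

theorem norm_sq_toEuclideanLin_exp_real_smul (t : ℝ) (z : EuclideanSpace ℂ n) :
    ‖toEuclideanLin (NormedSpace.exp (t • B)) z‖ ^ 2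
      = ∑ i, ‖toEuclideanLin (star (hB.eigenvectorUnitary : Matrix n n ℂ)) z i‖ ^ 2
          * Real.exp (2 * hB.eigenvalues i * t) := by
  rw [hB.exp_real_smul, norm_toEuclideanLin_unitary_conj hB.eigenvectorUnitary.2,
    norm_sq_toEuclideanLin_diagonal]
  refine Finset.sum_congr rfl fun i _ => ?_
  rw [Complex.norm_real, Real.norm_of_nonneg (Real.exp_nonneg _), ← Real.exp_nat_mul, mul_comm]
  ring_nf

end IsHermitian

end Matrix

theorem integrable_and_convexOn_integral_sq_norm_exp_smul_general
    (n : ℕ) (B : Matrix (Fin n) (Fin n) ℂ) (hB : Bᴴ = B)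
    [MeasurableSpace (EuclideanSpace ℂ (Fin n))] [BorelSpace (EuclideanSpace ℂ (Fin n))]
    (μ : Measure (EuclideanSpace ℂ (Fin n))) [IsFiniteMeasure μ] :
    (∀ t : ℝ, Integrable
        (fun z : EuclideanSpace ℂ (Fin n) =>
          ‖Matrix.toEuclideanLin (NormedSpace.exp (t • B)) z‖ ^ 2 / ‖z‖ ^ 2) μ) ∧
      ConvexOn ℝ Set.univ
        (fun t : ℝ => ∫ z : EuclideanSpace ℂ (Fin n),
          ‖Matrix.toEuclideanLin (NormedSpace.exp (t • B)) z‖ ^ 2 / ‖z‖ ^ 2 ∂μ) := by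
  have hint : ∀ t : ℝ, Integrable (fun z : EuclideanSpace ℂ (Fin n) =>
      ‖Matrix.toEuclideanLin (NormedSpace.exp (t • B)) z‖ ^ 2 / ‖z‖ ^ 2) μ := fun t =>
    integrable_sq_norm_div_sq_norm
      (LinearMap.toContinuousLinearMap (toEuclideanLin (NormedSpace.exp (t • B)))) μ
  refine ⟨hint, convexOn_integral convex_univ (fun t _ => hint t) (ae_of_all _ fun z => ?_)⟩
  simp_rw [IsHermitian.norm_sq_toEuclideanLin_exp_real_smul hB, div_eq_inv_mul]
  exact (convexOn_sum_mul_exp_mul _ (fun i _ => sq_nonneg _) _).smul (by positivity)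

/-- for `B` Hermitian and `μ` a finite Borel measure on `ℂⁿ` with
`μ {0} = 0`, the function `t ↦ ∫ ‖exp (t • B) z‖² / ‖z‖² dμ(z)` is well-defined
(the integrand is integrable for every `t`) and convex on `ℝ`. -/
theorem integrable_and_convexOn_integral_sq_norm_exp_smul
    (n : ℕ) (B : Matrix (Fin n) (Fin n) ℂ) (hB : Bᴴ = B)
    [MeasurableSpace (EuclideanSpace ℂ (Fin n))] [BorelSpace (EuclideanSpace ℂ (Fin n))]
    (μ : Measure (EuclideanSpace ℂ (Fin n))) [IsFiniteMeasure μ]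
    (hμ0 : μ {0} = 0) :
    (∀ t : ℝ, Integrable
        (fun z : EuclideanSpace ℂ (Fin n) =>
          ‖Matrix.toEuclideanLin (NormedSpace.exp (t • B)) z‖ ^ 2 / ‖z‖ ^ 2) μ) ∧
      ConvexOn ℝ Set.univ
        (fun t : ℝ => ∫ z : EuclideanSpace ℂ (Fin n),
          ‖Matrix.toEuclideanLin (NormedSpace.exp (t • B)) z‖ ^ 2 / ‖z‖ ^ 2 ∂μ) :=
  integrable_and_convexOn_integral_sq_norm_exp_smul_general n B hB μ
end

section
/- Let B be a Hermitian n×n complex matrix and let μ be a finite Borel measure on ℂⁿ with μ({0}) = 0. Then the function g : ℝ → ℝ, g(t) = ∫ (‖exp(t·B)·z‖²/‖z‖²) dμ(z), is differentiable at 0 with derivative g'(0) = 2·∫ (Re⟪B·z, z⟫/‖z‖²) dμ(z), where exp denotes the matrix exponential, ‖·‖ the Euclidean norm and ⟪·,·⟫ the Hermitian inner product on ℂⁿ. -/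
/-!
Differentiating under the integral sign. For a bounded operator `A`, the derivative of
`t ↦ ‖exp (t A) z‖²` is `2 Re ⟪exp (t A) z, exp (t A) (A z)⟫`, which is at most
`2 ‖exp (t A)‖² ‖A‖ ‖z‖²` in absolute value. After division by `‖z‖²` the derivatives are
therefore bounded uniformly in `z` and in `|t| < 1`, so on a finite measure the constant bound
dominates them. The matrix statement is the case `A = toEuclideanCLM B`, since
`toEuclideanCLM` is a continuous algebra map and hence commutes with `exp`.
-/

open Matrix MeasureTheory NormedSpace

theorem Matrix.toEuclideanCLM_exp {𝕜 n : Type*} [RCLike 𝕜] [Fintype n] [DecidableEq n]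
    (M : Matrix n n 𝕜) :
    toEuclideanCLM (n := n) (𝕜 := 𝕜) (exp M) = exp (toEuclideanCLM (n := n) (𝕜 := 𝕜) M) := by
  -- `map_exp` needs normed algebras; `exp` itself only sees the (common) topology.
  open scoped Matrix.Norms.L2Operator in
  let _ : NormedAlgebra ℚ (Matrix n n 𝕜) := .restrictScalars ℚ 𝕜 _
  have _ : CompleteSpace (Matrix n n 𝕜) := FiniteDimensional.complete 𝕜 _
  have hcont : Continuous (toEuclideanCLM (n := n) (𝕜 := 𝕜)) :=
    (toEuclideanCLM (n := n) (𝕜 := 𝕜)).toAlgEquiv.toLinearMap.continuous_of_finiteDimensional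
  exact map_exp _ hcont M

section

variable {E : Type*} [NormedAddCommGroup E] [InnerProductSpace ℂ E]

theorem abs_re_inner_apply_apply_le (T A : E →L[ℂ] E) (z : E) :
    |(inner ℂ (T z) (T (A z))).re| ≤ ‖T‖ ^ 2 * ‖A‖ * ‖z‖ ^ 2 :=
  calc |(inner ℂ (T z) (T (A z))).re|
      ≤ ‖T z‖ * ‖T (A z)‖ := (Complex.abs_re_le_norm _).trans (norm_inner_le_norm _ _)
    _ ≤ (‖T‖ * ‖z‖) * (‖T‖ * (‖A‖ * ‖z‖)) := by
      gcongr
      · exact T.le_opNorm z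
      · exact (T.le_opNorm _).trans (by gcongr; exact A.le_opNorm z)
    _ = ‖T‖ ^ 2 * ‖A‖ * ‖z‖ ^ 2 := by ring

variable [CompleteSpace E]

theorem hasDerivAt_sq_norm_exp_smul_apply (A : E →L[ℂ] E) (z : E) (t : ℝ) :
    HasDerivAt (fun u : ℝ => ‖exp (u • A) z‖ ^ 2)
      (2 * (inner ℂ (exp (t • A) z) (exp (t • A) (A z))).re) t := by
  -- The real inner product `re ⟪x, y⟫` is what `HasDerivAt.norm_sq` differentiates against.
  let _ := InnerProductSpace.rclikeToReal ℂ E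
  have hv : HasDerivAt (fun u : ℝ => exp (u • A) z) (exp (t • A) (A z)) t :=
    ((ContinuousLinearMap.apply ℂ E z).restrictScalars ℝ).hasFDerivAt.comp_hasDerivAt t
      (hasDerivAt_exp_smul_const A t)
  exact hv.norm_sq

theorem exists_norm_exp_smul_le (A : E →L[ℂ] E) :
    ∃ C, ∀ t ∈ Metric.ball (0 : ℝ) 1, ‖exp (t • A)‖ ≤ C := by
  obtain ⟨C, hC⟩ := isCompact_closedBall (0 : ℝ) 1 |>.exists_bound_of_continuousOn
    (differentiable_exp_smul_const ℝ A).continuous.continuousOn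
  exact ⟨C, fun t ht => hC t (Metric.ball_subset_closedBall ht)⟩

theorem hasDerivAt_integral_sq_norm_exp_smul_apply_div_sq_norm
    [MeasurableSpace E] [OpensMeasurableSpace E] (μ : Measure E) [IsFiniteMeasure μ]
    (A : E →L[ℂ] E) :
    HasDerivAt (fun t : ℝ => ∫ z, ‖exp (t • A) z‖ ^ 2 / ‖z‖ ^ 2 ∂μ)
      (2 * ∫ z, (inner ℂ (A z) z).re / ‖z‖ ^ 2 ∂μ) 0 := by
  obtain ⟨C, hC⟩ := exists_norm_exp_smul_le A
  let F' : ℝ → E → ℝ := fun t z =>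
    2 * (inner ℂ (exp (t • A) z) (exp (t • A) (A z))).re / ‖z‖ ^ 2
  have hF'_le : ∀ z, ∀ t ∈ Metric.ball (0 : ℝ) 1, ‖F' t z‖ ≤ 2 * C ^ 2 * ‖A‖ := by
    intro z t ht
    rw [Real.norm_eq_abs, abs_div, abs_of_nonneg (by positivity : (0 : ℝ) ≤ ‖z‖ ^ 2)]
    refine div_le_of_le_mul₀ (by positivity) (by positivity) ?_
    calc |2 * (inner ℂ (exp (t • A) z) (exp (t • A) (A z))).re|
        = 2 * |(inner ℂ (exp (t • A) z) (exp (t • A) (A z))).re| := by rw [abs_mul, abs_two]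
      _ ≤ 2 * (‖exp (t • A)‖ ^ 2 * ‖A‖ * ‖z‖ ^ 2) := by
        gcongr
        exact abs_re_inner_apply_apply_le _ A z
      _ ≤ 2 * (C ^ 2 * ‖A‖ * ‖z‖ ^ 2) := by
        gcongr
        exact hC t ht
      _ = 2 * C ^ 2 * ‖A‖ * ‖z‖ ^ 2 := by ring
  have hF_meas : ∀ t : ℝ, AEStronglyMeasurable (fun z => ‖exp (t • A) z‖ ^ 2 / ‖z‖ ^ 2) μ :=
    fun t => (by fun_prop : Measurable _).aestronglyMeasurable
  have hF_int : Integrable (fun z => ‖exp ((0 : ℝ) • A) z‖ ^ 2 / ‖z‖ ^ 2) μ := by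
    refine (integrable_const (1 : ℝ)).mono' (hF_meas 0) (.of_forall fun z => ?_)
    simpa using div_self_le_one (‖z‖ ^ 2)
  have hF'_meas : AEStronglyMeasurable (F' 0) μ :=
    (by fun_prop : Measurable _).aestronglyMeasurable
  obtain ⟨-, h⟩ := hasDerivAt_integral_of_dominated_loc_of_deriv_le (x₀ := (0 : ℝ))
    (Metric.ball_mem_nhds 0 one_pos) (.of_forall hF_meas) hF_int hF'_meas
    (.of_forall hF'_le) (integrable_const _)
    (.of_forall fun z t _ => (hasDerivAt_sq_norm_exp_smul_apply A z t).div_const _)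
  refine h.congr_deriv ?_
  rw [← integral_const_mul]
  congr 1 with z
  simp only [F', zero_smul, exp_zero, one_apply_eq_self, mul_div_assoc]
  rw [← inner_conj_symm, Complex.conj_re]

end

theorem hasDerivAt_integral_sq_norm_exp_smul_general
    (n : ℕ) (B : Matrix (Fin n) (Fin n) ℂ)
    [MeasurableSpace (EuclideanSpace ℂ (Fin n))] [BorelSpace (EuclideanSpace ℂ (Fin n))]
    (μ : Measure (EuclideanSpace ℂ (Fin n))) [IsFiniteMeasure μ] :
    HasDerivAt
      (fun t : ℝ => ∫ z : EuclideanSpace ℂ (Fin n),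
        ‖Matrix.toEuclideanLin (NormedSpace.exp (t • B)) z‖ ^ 2 / ‖z‖ ^ 2 ∂μ)
      (2 * ∫ z : EuclideanSpace ℂ (Fin n),
        (inner ℂ (Matrix.toEuclideanLin B z) z : ℂ).re / ‖z‖ ^ 2 ∂μ) 0 := by
  have hexp (t : ℝ) :
      exp (t • toEuclideanCLM (𝕜 := ℂ) B) = toEuclideanCLM (𝕜 := ℂ) (exp (t • B)) := by
    rw [toEuclideanCLM_exp, ← Complex.coe_smul, map_smul]
    rfl
  have h := hasDerivAt_integral_sq_norm_exp_smul_apply_div_sq_norm μ (toEuclideanCLM (𝕜 := ℂ) B)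
  simp only [hexp] at h
  exact h

/-- for `B` Hermitian and `μ` a finite Borel measure on `ℂⁿ` with
`μ {0} = 0`, the function `g(t) = ∫ ‖exp (t • B) z‖² / ‖z‖² dμ(z)` is differentiable
at `0` with derivative `g'(0) = 2 · ∫ Re ⟪B z, z⟫ / ‖z‖² dμ(z)`. -/
theorem hasDerivAt_integral_sq_norm_exp_smul
    (n : ℕ) (B : Matrix (Fin n) (Fin n) ℂ) (hB : Bᴴ = B)
    [MeasurableSpace (EuclideanSpace ℂ (Fin n))] [BorelSpace (EuclideanSpace ℂ (Fin n))]
    (μ : Measure (EuclideanSpace ℂ (Fin n))) [IsFiniteMeasure μ]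
    (hμ0 : μ {0} = 0) :
    HasDerivAt
      (fun t : ℝ => ∫ z : EuclideanSpace ℂ (Fin n),
        ‖Matrix.toEuclideanLin (NormedSpace.exp (t • B)) z‖ ^ 2 / ‖z‖ ^ 2 ∂μ)
      (2 * ∫ z : EuclideanSpace ℂ (Fin n),
        (inner ℂ (Matrix.toEuclideanLin B z) z : ℂ).re / ‖z‖ ^ 2 ∂μ) 0 :=
  hasDerivAt_integral_sq_norm_exp_smul_general n B μ
end
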